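/- arXiv:2309.03819 — 2 statements merged into one kernel-verified Lean document; each statement's English description precedes it below -/
import Mathlib

section
/- Every finitely generated residually finite group is Hopfian. -/
theorem stmt_7 {G : Type} [Group G] (hfg : Group.FG G)
    (hrf : ∀ g : G, g ≠ 1 → ∃ (Q : Type) (_ : Group Q) (_ : Finite Q)
      (f : G →* Q), f g ≠ 1) :
    ∀ f : G →* G, Function.Surjective f → Function.Injective f := by
  intro f hsurj
  rw [← MonoidHom.ker_eq_bot_iff, Subgroup.eq_bot_iff_forall]
  intro g hg
  by_contra hg1
  obtain ⟨Q, _, _, ψ, hψ⟩ := hrf g hg1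
  -- Hom(G, Q) is finite
  obtain ⟨S, hS⟩ := hfg.out
  have hfin : Finite (G →* Q) := by
    have : Function.Injective (fun (φ : G →* Q) => (fun s : S => φ s)) := by
      intro φ₁ φ₂ h
      ext x
      have : Set.EqOn φ₁ φ₂ (S : Set G) := fun s hs =>
        congrFun h ⟨s, hs⟩
      have := MonoidHom.eqOn_closure this
      rw [hS] at this
      exact this (Subgroup.mem_top x)
    exact Finite.of_injective _ this
  -- precomposition with f is injective, hence surjective
  have hinj : Function.Injective (fun (φ : G →* Q) => φ.comp f) := by
    intro φ₁ φ₂ h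
    ext x
    obtain ⟨y, rfl⟩ := hsurj x
    exact DFunLike.congr_fun h y
  have hsurj' := Finite.injective_iff_surjective.mp hinj
  obtain ⟨χ, hχ⟩ := hsurj' ψ
  have : ψ g = 1 := by
    rw [← hχ]
    simp [MonoidHom.comp_apply, MonoidHom.mem_ker.mp hg]
  exact hψ this
end

section
/- Every finitely generated free group is Hopfian. -/
/-!
Mal'cev: a finitely generated residually finite group is Hopfian. If `f` is a surjective
endomorphism and `Q` a finite quotient, precomposition with `f` is an injective self-map of the
finite set `Hom(G, Q)`, hence surjective; so every map to `Q` factors through `f` and kills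
`ker f`, which therefore lies in every finite-index normal subgroup.

Free groups are residually finite: given a word `w ≠ 1`, let `S` be the finite set of values of the
suffixes of `w`. Left multiplication by a generator is a partial injection of `S`; extend it to a
permutation. The resulting action of the free group moves `1 ∈ S` to `w` along the suffixes.
-/

open Function

section ExtendSMulPerm

variable {G X : Type*} [Group G] [MulAction G X] (S : Set X) [Finite S] (g : G)

/-- `x ↦ g • x` on `S ∩ g⁻¹ • S`, completed arbitrarily to a permutation of `S`. -/
noncomputable def Set.extendSMulPerm : Equiv.Perm S := by
  classical
  exact Equiv.extendSubtype (p := fun x : S => g • (x : X) ∈ S)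
    (q := fun y : S => g⁻¹ • (y : X) ∈ S)
    { toFun := fun x => ⟨⟨g • (x : X), x.2⟩, by simp [x.1.2]⟩
      invFun := fun y => ⟨⟨g⁻¹ • (y : X), y.2⟩, by simp [y.1.2]⟩
      left_inv := fun x => by simp
      right_inv := fun y => by simp }

variable {S g}

theorem Set.extendSMulPerm_apply {x : X} (hx : x ∈ S) (hgx : g • x ∈ S) :
    S.extendSMulPerm g ⟨x, hx⟩ = ⟨g • x, hgx⟩ := by
  classical
  unfold Set.extendSMulPerm
  exact (Equiv.extendSubtype_apply_of_mem (p := fun y : S => g • (y : X) ∈ S) _ ⟨x, hx⟩ hgx).trans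
    rfl

theorem Set.extendSMulPerm_inv_apply {x : X} (hx : x ∈ S) (hgx : g⁻¹ • x ∈ S) :
    (S.extendSMulPerm g)⁻¹ ⟨x, hx⟩ = ⟨g⁻¹ • x, hgx⟩ := by
  rw [Equiv.Perm.inv_eq_iff_eq, Set.extendSMulPerm_apply hgx (by simpa using hx)]
  simp

end ExtendSMulPerm

namespace FreeGroup

variable {α : Type*}

theorem mk_cons (a : α) (b : Bool) (L : List (α × Bool)) :
    mk ((a, b) :: L) = cond b (of a) (of a)⁻¹ * mk L := by
  cases b <;> simp [of, mul_mk, inv_mk, invRev]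

theorem lift_extendSMulPerm_mk_apply_one {S : Set (FreeGroup α)} [Finite S] (h1 : 1 ∈ S) :
    ∀ (L : List (α × Bool)), (∀ T, T <:+ L → mk T ∈ S) →
      (lift (fun a => S.extendSMulPerm (of a)) (mk L) ⟨1, h1⟩ : FreeGroup α) = mk L
  | [], _ => rfl
  | (a, b) :: L, hL => by
    have hL' : ∀ T, T <:+ L → mk T ∈ S := fun T hT => hL T (hT.trans (List.suffix_cons _ _))
    have ih :
        lift (fun a => S.extendSMulPerm (of a)) (mk L) ⟨1, h1⟩ = ⟨mk L, hL' L L.suffix_refl⟩ :=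
      Subtype.ext (lift_extendSMulPerm_mk_apply_one h1 L hL')
    have hcons := hL _ ((a, b) :: L).suffix_refl
    rw [mk_cons] at hcons ⊢
    rw [_root_.map_mul, Equiv.Perm.mul_apply, ih]
    cases b
    · rw [cond_false, _root_.map_inv, lift_apply_of, Set.extendSMulPerm_inv_apply _ hcons]; rfl
    · rw [cond_true, lift_apply_of, Set.extendSMulPerm_apply _ hcons]; rfl

instance : Group.ResiduallyFinite (FreeGroup α) :=
  Group.residuallyFinite_of_forall_exists_finite_monoidHom fun g hg => by
    classical
    let S : Set (FreeGroup α) := mk '' {T | T ∈ g.toWord.tails}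
    have : Finite S := ((List.finite_toSet _).image mk).to_subtype
    have h1 : (1 : FreeGroup α) ∈ S := ⟨[], by simp, rfl⟩
    have hS : ∀ T, T <:+ g.toWord → mk T ∈ S := fun T hT => ⟨T, (List.mem_tails _ _).mpr hT, rfl⟩
    refine ⟨Equiv.Perm S, inferInstance, inferInstance, lift fun a => S.extendSMulPerm (of a),
      fun h => hg ?_⟩
    have := lift_extendSMulPerm_mk_apply_one h1 g.toWord hS
    simp only [mk_toWord, h, Equiv.Perm.one_apply] at this
    exact this.symm

end FreeGroup

theorem MonoidHom.finite_of_fg {G H : Type*} [Group G] [Group.FG G] [Group H] [Finite H] :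
    Finite (G →* H) := by
  obtain ⟨S, hS, hSfin⟩ := Group.fg_iff.mp ‹Group.FG G›
  have := hSfin.to_subtype
  exact Finite.of_injective (fun ψ (s : S) => ψ s)
    fun ψ₁ ψ₂ h => MonoidHom.eq_of_eqOn_dense hS fun s hs => congrFun h ⟨s, hs⟩

theorem MonoidHom.injective_of_surjective_of_residuallyFinite {G : Type*} [Group G] [Group.FG G]
    [Group.ResiduallyFinite G] {f : G →* G} (hf : Surjective f) : Injective f := by
  refine (injective_iff_map_eq_one f).mpr fun x hx =>
    Group.eq_one_iff_forall_finiteIndexNormalSubroup x fun N => ?_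
  have : Finite (G →* G ⧸ N.toSubgroup) := MonoidHom.finite_of_fg
  have hcomp : Surjective fun ψ : G →* G ⧸ N.toSubgroup => ψ.comp f :=
    Finite.injective_iff_surjective.mp fun ψ₁ ψ₂ h => (MonoidHom.cancel_right hf).mp h
  obtain ⟨ψ, hψ⟩ := hcomp (QuotientGroup.mk' N.toSubgroup)
  rw [← FiniteIndexNormalSubgroup.mem_toSubgroup_iff, ← QuotientGroup.eq_one_iff,
    ← QuotientGroup.mk'_apply, ← hψ, MonoidHom.comp_apply, hx, map_one]

theorem stmt_9 (n : ℕ) :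
    ∀ f : FreeGroup (Fin n) →* FreeGroup (Fin n),
      Function.Surjective f → Function.Injective f :=
  fun _ hf => MonoidHom.injective_of_surjective_of_residuallyFinite hf
end
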